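/- arXiv:2209.03247 — 10 statements merged into one kernel-verified Lean document; each statement's English description precedes it below -/
import Mathlib

section
/- Let L > 0, let a < c be real numbers, and let h : [a,c] → ℝ be an L-Lipschitz function (|h(x) − h(y)| ≤ L|x − y| for all x, y ∈ [a,c]) such that h(x) > x for every x ∈ [a,c) and c is the unique fixed point of h in [a,c]. Fix t with 0 < t ≤ 1/(1+L), let x₀ ∈ [a,c], and define x_{n+1} = (1−t)·x_n + t·h(x_n) for all n ≥ 0. Then the sequence (x_n) converges to c. -/
/-!
Since `h x ≥ x` on `[a,c]`, each Krasnoselskii step moves to the right, and since `h c = c` the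
Lipschitz bound gives `h x - x ≤ (1 + L) (c - x)`, so a step of size `t ≤ 1 / (1 + L)` never
overshoots `c`. The iterates therefore increase inside `[a,c]` and converge; by continuity of `h`
the limit is a fixed point of `h` in `[a,c]`, which can only be `c`.
-/

open Filter Topology Set

theorem isFixedPt_of_tendsto_krasnoselskii {E : Type*} [AddCommGroup E] [Module ℝ E]
    [TopologicalSpace E] [IsTopologicalAddGroup E] [ContinuousSMul ℝ E] [T2Space E]
    {h : E → E} {s : Set E} {t : ℝ} {x : ℕ → E} {l : E} (ht : t ≠ 0)
    (hrec : ∀ n, x (n + 1) = (1 - t) • x n + t • h (x n))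
    (hxs : ∀ n, x n ∈ s) (hh : ContinuousWithinAt h s l) (hx : Tendsto x atTop (𝓝 l)) :
    Function.IsFixedPt h l := by
  have hhx : Tendsto (fun n => h (x n)) atTop (𝓝 (h l)) :=
    hh.tendsto.comp (tendsto_nhdsWithin_iff.mpr ⟨hx, Eventually.of_forall hxs⟩)
  have hnext : Tendsto (fun n => x (n + 1)) atTop (𝓝 ((1 - t) • l + t • h l)) := by
    simp_rw [hrec]
    exact (hx.const_smul _).add (hhx.const_smul _)
  have hlim : (1 - t) • l + t • h l = l :=
    tendsto_nhds_unique hnext (hx.comp (tendsto_add_atTop_nat 1))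
  rw [sub_smul, one_smul, sub_add_eq_add_sub, sub_eq_iff_eq_add, add_right_inj] at hlim
  exact smul_right_injective E ht hlim

theorem krasnoselskii_step_mem_Icc {x y c L t : ℝ} (hxc : x ≤ c) (hxy : x ≤ y)
    (hyc : y - x ≤ (1 + L) * (c - x)) (ht : 0 ≤ t) (htL : t * (1 + L) ≤ 1) :
    (1 - t) * x + t * y ∈ Icc x c :=
  ⟨by nlinarith, by nlinarith⟩

theorem exists_tendsto_of_monotone_of_mem_Icc {a c : ℝ} {x : ℕ → ℝ} (hmono : Monotone x)
    (hmem : ∀ n, x n ∈ Icc a c) : ∃ l ∈ Icc a c, Tendsto x atTop (𝓝 l) := by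
  have hx : Tendsto x atTop (𝓝 (⨆ n, x n)) :=
    tendsto_atTop_ciSup hmono ⟨c, by rintro _ ⟨n, rfl⟩; exact (hmem n).2⟩
  exact ⟨_, isClosed_Icc.mem_of_tendsto hx (Eventually.of_forall hmem), hx⟩

theorem stmt_0_general (L a c t : ℝ) (h : ℝ → ℝ)
    (hlip : ∀ x ∈ Set.Icc a c, ∀ y ∈ Set.Icc a c, |h x - h y| ≤ L * |x - y|)
    (hgt : ∀ x ∈ Set.Ico a c, h x > x)
    (hfix : h c = c)
    (huniq : ∀ x ∈ Set.Icc a c, h x = x → x = c)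
    (ht0 : 0 < t) (ht1 : t ≤ 1 / (1 + L))
    (x : ℕ → ℝ) (hx0 : x 0 ∈ Set.Icc a c)
    (hrec : ∀ n, x (n + 1) = (1 - t) * x n + t * h (x n)) :
    Filter.Tendsto x Filter.atTop (nhds c) := by
  have htL : t * (1 + L) ≤ 1 := (le_div_iff₀ (one_div_pos.mp (ht0.trans_le ht1))).mp ht1
  have hc : c ∈ Icc a c := ⟨hx0.1.trans hx0.2, le_rfl⟩
  have hstep : ∀ y ∈ Icc a c, (1 - t) * y + t * h y ∈ Icc y c := by
    intro y hy
    have hyc : |h y - c| ≤ L * (c - y) := by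
      simpa [hfix, abs_sub_comm y c, abs_of_nonneg (sub_nonneg.2 hy.2)] using hlip y hy c hc
    refine krasnoselskii_step_mem_Icc hy.2 ?_ (by linarith [le_abs_self (h y - c)]) ht0.le htL
    rcases hy.2.lt_or_eq with hlt | rfl
    · exact (hgt y ⟨hy.1, hlt⟩).le
    · exact hfix.ge
  have hmem : ∀ n, x n ∈ Icc a c := by
    intro n
    induction n with
    | zero => exact hx0
    | succ n ih => exact hrec n ▸ ⟨ih.1.trans (hstep _ ih).1, (hstep _ ih).2⟩
  have hmono : Monotone x := monotone_nat_of_le_succ fun n => hrec n ▸ (hstep _ (hmem n)).1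
  obtain ⟨l, hl, hx⟩ := exists_tendsto_of_monotone_of_mem_Icc hmono hmem
  have hcont : ContinuousOn h (Icc a c) :=
    (LipschitzOnWith.of_dist_le' (K := L) fun u hu v hv => by
      simpa only [Real.dist_eq] using hlip u hu v hv).continuousOn
  have hfixl : h l = l :=
    isFixedPt_of_tendsto_krasnoselskii ht0.ne' (by simpa using hrec) hmem (hcont l hl) hx
  rwa [huniq l hl hfixl] at hx

/-- Krasnoselskii iteration for a non-self L-Lipschitz map on `[a,c]` with
`h x > x` on `[a,c)` and `c` the unique fixed point in `[a,c]`: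
the iterates converge to `c`. -/
theorem stmt_0 (L a c t : ℝ) (hL : 0 < L) (hac : a < c) (h : ℝ → ℝ)
    (hlip : ∀ x ∈ Set.Icc a c, ∀ y ∈ Set.Icc a c, |h x - h y| ≤ L * |x - y|)
    (hgt : ∀ x ∈ Set.Ico a c, h x > x)
    (hfix : h c = c)
    (huniq : ∀ x ∈ Set.Icc a c, h x = x → x = c)
    (ht0 : 0 < t) (ht1 : t ≤ 1 / (1 + L))
    (x : ℕ → ℝ) (hx0 : x 0 ∈ Set.Icc a c)
    (hrec : ∀ n, x (n + 1) = (1 - t) * x n + t * h (x n)) :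
    Filter.Tendsto x Filter.atTop (nhds c) :=
  stmt_0_general L a c t h hlip hgt hfix huniq ht0 ht1 x hx0 hrec
end

section
/- Let L > 0, let c < a be real numbers, and let h : [c,a] → ℝ be an L-Lipschitz function (|h(x) − h(y)| ≤ L|x − y| for all x, y ∈ [c,a]) such that h(x) < x for every x ∈ (c,a] and c is the unique fixed point of h in [c,a]. Fix t with 0 < t ≤ 1/(1+L), let x₀ ∈ [c,a], and define x_{n+1} = (1−t)·x_n + t·h(x_n) for all n ≥ 0. Then the sequence (x_n) converges to c. -/
/-- Krasnoselskii iteration for a non-self L-Lipschitz map on `[c,a]` with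
`h x < x` on `(c,a]` and `c` the unique fixed point in `[c,a]`:
the iterates converge to `c`. -/
theorem stmt_1 (L a c t : ℝ) (hL : 0 < L) (hca : c < a) (h : ℝ → ℝ)
    (hlip : ∀ x ∈ Set.Icc c a, ∀ y ∈ Set.Icc c a, |h x - h y| ≤ L * |x - y|)
    (hlt : ∀ x ∈ Set.Ioc c a, h x < x)
    (hfix : h c = c)
    (huniq : ∀ x ∈ Set.Icc c a, h x = x → x = c)
    (ht0 : 0 < t) (ht1 : t ≤ 1 / (1 + L))
    (x : ℕ → ℝ) (hx0 : x 0 ∈ Set.Icc c a)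
    (hrec : ∀ n, x (n + 1) = (1 - t) * x n + t * h (x n)) :
    Filter.Tendsto x Filter.atTop (nhds c) := by
  have hL1 : (0:ℝ) < 1 + L := by linarith
  have ht1' : t * (1 + L) ≤ 1 := (le_div_iff₀ hL1).1 ht1
  have hle : ∀ y ∈ Set.Icc c a, h y ≤ y := by
    intro y hy
    rcases eq_or_lt_of_le hy.1 with heq | h'
    · subst heq; exact le_of_eq hfix
    · exact le_of_lt (hlt y ⟨h', hy.2⟩)
  have hmem : ∀ n, x n ∈ Set.Icc c a := by
    intro n
    induction n with
    | zero => exact hx0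
    | succ n ih =>
      have hlow : -(L * (x n - c)) ≤ h (x n) - c := by
        have h1 := hlip (x n) ih c ⟨le_refl c, le_of_lt hca⟩
        rw [hfix] at h1
        have habs : |x n - c| = x n - c := abs_of_nonneg (by linarith [ih.1])
        rw [habs] at h1
        have h2 := neg_abs_le (h (x n) - c)
        linarith
      constructor
      · rw [hrec n]
        have key : 0 ≤ (1 - t * (1 + L)) * (x n - c) :=
          mul_nonneg (by linarith) (by linarith [ih.1])
        have h3 : t * (-(L * (x n - c))) ≤ t * (h (x n) - c) :=
          mul_le_mul_of_nonneg_left hlow ht0.le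
        nlinarith
      · rw [hrec n]
        have h4 := hle (x n) ih
        nlinarith [ih.2]
  have hant : Antitone x := by
    apply antitone_nat_of_succ_le
    intro n
    rw [hrec n]
    have h4 := hle (x n) (hmem n)
    nlinarith
  have hbdd : BddBelow (Set.range x) := by
    refine ⟨c, ?_⟩
    rintro y ⟨n, rfl⟩
    exact (hmem n).1
  have htend : Filter.Tendsto x Filter.atTop (nhds (⨅ n, x n)) :=
    tendsto_atTop_ciInf hant hbdd
  set l := ⨅ n, x n with hl
  have hlc : c ≤ l := le_ciInf fun n => (hmem n).1
  have hla : l ≤ a := (ciInf_le hbdd 0).trans hx0.2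
  have hlm : l ∈ Set.Icc c a := ⟨hlc, hla⟩
  have hhtend : Filter.Tendsto (fun n => h (x n)) Filter.atTop (nhds (h l)) := by
    rw [tendsto_iff_dist_tendsto_zero]
    have hb : ∀ n, dist (h (x n)) (h l) ≤ L * dist (x n) l := by
      intro n
      simpa [Real.dist_eq] using hlip (x n) (hmem n) l hlm
    have hd : Filter.Tendsto (fun n => dist (x n) l) Filter.atTop (nhds 0) :=
      tendsto_iff_dist_tendsto_zero.1 htend
    exact squeeze_zero (fun n => dist_nonneg) hb (by simpa using hd.const_mul L)
  have h1 : Filter.Tendsto (fun n => x (n + 1)) Filter.atTop (nhds l) :=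
    htend.comp (Filter.tendsto_add_atTop_nat 1)
  have h2 : Filter.Tendsto (fun n => x (n + 1)) Filter.atTop
      (nhds ((1 - t) * l + t * h l)) := by
    simp only [hrec]
    exact (tendsto_const_nhds.mul htend).add (tendsto_const_nhds.mul hhtend)
  have heq : l = (1 - t) * l + t * h l := tendsto_nhds_unique h1 h2
  have heq' : t * (h l - l) = 0 := by linear_combination (-1 : ℝ) * heq
  have hfl : h l = l := by
    rcases mul_eq_zero.1 heq' with h5 | h5
    · exact absurd h5 (ne_of_gt ht0)
    · linarith
  rw [← huniq l hlm hfl]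
  exact htend
end

section
/- Let L > 0 and let h : ℝ → ℝ be an L-Lipschitz function (|h(x) − h(y)| ≤ L|x − y| for all x, y ∈ ℝ). Fix t with 0 < t ≤ 1/(1+L), let x₀ = e ∈ ℝ, and define x_{n+1} = (1−t)·x_n + t·h(x_n) for all n ≥ 0. Then the sequence (x_n) is monotone (nondecreasing or nonincreasing), and either it converges to a fixed point of h, or |x_n| tends to infinity. -/
/-- Krasnoselskii iteration of an L-Lipschitz self-map of `ℝ` is monotone, and
either converges to a fixed point of `h` or `|x n| → ∞`. -/
theorem stmt_2 (L t e : ℝ) (hL : 0 < L) (h : ℝ → ℝ)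
    (hlip : ∀ x y : ℝ, |h x - h y| ≤ L * |x - y|)
    (ht0 : 0 < t) (ht1 : t ≤ 1 / (1 + L))
    (x : ℕ → ℝ) (hx0 : x 0 = e)
    (hrec : ∀ n, x (n + 1) = (1 - t) * x n + t * h (x n)) :
    (Monotone x ∨ Antitone x) ∧
      ((∃ c : ℝ, h c = c ∧ Filter.Tendsto x Filter.atTop (nhds c)) ∨
        Filter.Tendsto (fun n => |x n|) Filter.atTop Filter.atTop) := by
  set g : ℝ → ℝ := fun y => (1 - t) * y + t * h y with hgdef
  have hL1 : (0:ℝ) < 1 + L := by linarith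
  have ht' : t * (1 + L) ≤ 1 := by
    rw [le_div_iff₀ hL1] at ht1; linarith
  have hgmono : Monotone g := by
    intro a b hab
    have habs : |a - b| = b - a := by
      rw [abs_sub_comm, abs_of_nonneg (sub_nonneg.mpr hab)]
    have h1 : h a - h b ≤ L * (b - a) := by
      calc h a - h b ≤ |h a - h b| := le_abs_self _
        _ ≤ L * |a - b| := hlip a b
        _ = L * (b - a) := by rw [habs]
    have h2 : t * (h a - h b) ≤ t * (L * (b - a)) :=
      mul_le_mul_of_nonneg_left h1 ht0.le
    simp only [hgdef]
    nlinarith [mul_nonneg (sub_nonneg.mpr ht') (sub_nonneg.mpr hab)]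
  have hgx : ∀ n, x (n + 1) = g (x n) := fun n => hrec n
  have hcont : Continuous h := by
    have hlw : LipschitzWith (Real.toNNReal L) h := by
      apply LipschitzWith.of_dist_le_mul
      intro a b
      rw [Real.dist_eq, Real.dist_eq]
      calc |h a - h b| ≤ L * |a - b| := hlip a b
        _ = Real.toNNReal L * |a - b| := by rw [Real.coe_toNNReal L hL.le]
    exact hlw.continuous
  have hgcont : Continuous g := by
    simp only [hgdef]
    exact (continuous_const.mul continuous_id).add (continuous_const.mul hcont)
  have hfix : ∀ c : ℝ, Filter.Tendsto x Filter.atTop (nhds c) → h c = c := by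
    intro c hc
    have h2 : Filter.Tendsto (fun n => x (n + 1)) Filter.atTop (nhds c) :=
      hc.comp (Filter.tendsto_add_atTop_nat 1)
    have h3 : Filter.Tendsto (fun n => g (x n)) Filter.atTop (nhds (g c)) :=
      (hgcont.tendsto c).comp hc
    have h4 : Filter.Tendsto (fun n => x (n + 1)) Filter.atTop (nhds (g c)) := by
      simpa only [hgx] using h3
    have h5 : g c = c := tendsto_nhds_unique h4 h2
    have h6 : (1 - t) * c + t * h c = c := h5
    have h7 : t * (h c - c) = 0 := by linear_combination h6
    rcases mul_eq_zero.mp h7 with h8 | h8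
    · exact absurd h8 (ne_of_gt ht0)
    · linarith
  rcases le_or_gt (x 0) (x 1) with hup | hdown
  · have hmono : Monotone x := by
      apply monotone_nat_of_le_succ
      intro n
      induction n with
      | zero => exact hup
      | succ k ih =>
        calc x (k+1) = g (x k) := hgx k
          _ ≤ g (x (k+1)) := hgmono ih
          _ = x (k+2) := (hgx (k+1)).symm
    refine ⟨Or.inl hmono, ?_⟩
    by_cases hb : BddAbove (Set.range x)
    · have hc := tendsto_atTop_ciSup hmono hb
      exact Or.inl ⟨_, hfix _ hc, hc⟩
    · have hx : Filter.Tendsto x Filter.atTop Filter.atTop :=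
        Filter.tendsto_atTop_atTop_of_monotone' hmono hb
      exact Or.inr (Filter.tendsto_abs_atTop_atTop.comp hx)
  · have hanti : Antitone x := by
      apply antitone_nat_of_succ_le
      intro n
      induction n with
      | zero => exact hdown.le
      | succ k ih =>
        calc x (k+2) = g (x (k+1)) := hgx (k+1)
          _ ≤ g (x k) := hgmono ih
          _ = x (k+1) := (hgx k).symm
    refine ⟨Or.inr hanti, ?_⟩
    by_cases hb : BddBelow (Set.range x)
    · have hc := tendsto_atTop_ciInf hanti hb
      exact Or.inl ⟨_, hfix _ hc, hc⟩
    · have hmono' : Monotone (fun n => -x n) := fun a b hab => neg_le_neg (hanti hab)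
      have hb' : ¬ BddAbove (Set.range fun n => -x n) := by
        intro hba
        apply hb
        obtain ⟨M, hM⟩ := hba
        refine ⟨-M, ?_⟩
        rintro y ⟨n, rfl⟩
        have h9 := hM ⟨n, rfl⟩
        simp only at h9
        linarith
      have hx : Filter.Tendsto (fun n => -x n) Filter.atTop Filter.atTop :=
        Filter.tendsto_atTop_atTop_of_monotone' hmono' hb'
      have := Filter.tendsto_abs_atTop_atTop.comp hx
      refine Or.inr ?_
      have heq : (abs ∘ fun n => -x n) = fun n => |x n| := by
        funext n; simp [abs_neg]
      rwa [heq] at this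
end

section
/- Let L > 0, let a < b be real numbers, and let h : [a,b] → ℝ be an L-Lipschitz function (|h(x) − h(y)| ≤ L|x − y| for all x, y ∈ [a,b]). Fix t with 0 < t ≤ 1/(1+L) and x₀ ∈ [a,b], and define x_{n+1} = (1−t)·x_n + t·h(x_n) as long as x_n ∈ [a,b]. Then the resulting sequence is monotone, and either all iterates remain in [a,b] and the sequence converges to a fixed point of h, or some iterate exits the interval [a,b]. -/
/-!
For `t ≤ 1 / (1 + L)` the averaged map `u ↦ (1 - t) u + t h(u)` is nondecreasing on `[a, b]`,
since the loss `t L |v - u|` from `h` is dominated by the gain `(1 - t) |v - u|`. An orbit of a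
nondecreasing map moves in the direction of its first step for as long as it is defined, so the
Krasnoselskii iterates are monotone. If they never leave `[a, b]` they converge, and continuity of
the averaged map makes the limit a fixed point of it, hence of `h`.
-/

open Filter Set Topology

section Orbit

variable {α : Type*} [Preorder α] {s : Set α} {g : α → α} {x : ℕ → α}

theorem MonotoneOn.orbit_le_succ (hg : MonotoneOn g s)
    (hx : ∀ n, x n ∈ s → x (n + 1) = g (x n)) (h0 : x 0 ≤ g (x 0)) :
    ∀ n, (∀ k ≤ n, x k ∈ s) → x n ≤ x (n + 1)
  | 0, hs => hx 0 (hs 0 le_rfl) ▸ h0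
  | n + 1, hs => by
    have hn := hs n n.le_succ
    have hn1 := hs (n + 1) le_rfl
    calc x (n + 1) = g (x n) := hx n hn
      _ ≤ g (x (n + 1)) :=
        hg hn hn1 (hg.orbit_le_succ hx h0 n fun k hk => hs k (hk.trans n.le_succ))
      _ = x (n + 2) := (hx (n + 1) hn1).symm

theorem MonotoneOn.orbit_le_of_le (hg : MonotoneOn g s)
    (hx : ∀ n, x n ∈ s → x (n + 1) = g (x n)) (h0 : x 0 ≤ g (x 0)) {i j : ℕ} (hij : i ≤ j)
    (hs : ∀ k < j, x k ∈ s) : x i ≤ x j := by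
  induction j, hij using Nat.le_induction with
  | base => exact le_rfl
  | succ j _ ih =>
    exact (ih fun k hk => hs k (hk.trans j.lt_succ_self)).trans
      (hg.orbit_le_succ hx h0 j fun k hk => hs k (Nat.lt_succ_of_le hk))

theorem MonotoneOn.orbit_ge_of_le (hg : MonotoneOn g s)
    (hx : ∀ n, x n ∈ s → x (n + 1) = g (x n)) (h0 : g (x 0) ≤ x 0) {i j : ℕ} (hij : i ≤ j)
    (hs : ∀ k < j, x k ∈ s) : x j ≤ x i :=
  MonotoneOn.orbit_le_of_le (α := αᵒᵈ) (monotoneOn_dual_iff.mpr hg) hx h0 hij hs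

end Orbit

theorem eq_of_tendsto_orbit {X : Type*} [TopologicalSpace X] [T2Space X] {s : Set X}
    {g : X → X} {x : ℕ → X} {c : X} (hg : ContinuousWithinAt g s c) (hs : ∀ n, x n ∈ s)
    (hx : ∀ n, x (n + 1) = g (x n)) (hc : Tendsto x atTop (𝓝 c)) : g c = c := by
  have hgx : Tendsto (g ∘ x) atTop (𝓝 (g c)) :=
    hg.tendsto.comp (tendsto_nhdsWithin_iff.mpr ⟨hc, Eventually.of_forall hs⟩)
  have hshift : Tendsto (g ∘ x) atTop (𝓝 c) := by
    simpa only [Function.comp_def, ← hx] using hc.comp (tendsto_add_atTop_nat 1)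
  exact tendsto_nhds_unique hgx hshift

theorem exists_tendsto_of_monotone_or_antitone {a b : ℝ} {x : ℕ → ℝ}
    (hmono : Monotone x ∨ Antitone x) (hs : ∀ n, x n ∈ Icc a b) :
    ∃ c ∈ Icc a b, Tendsto x atTop (𝓝 c) := by
  have hconv : ∃ c, Tendsto x atTop (𝓝 c) := by
    rcases hmono with hmono | hanti
    · exact ⟨_, tendsto_atTop_ciSup hmono ⟨b, by rintro _ ⟨n, rfl⟩; exact (hs n).2⟩⟩
    · exact ⟨_, tendsto_atTop_ciInf hanti ⟨a, by rintro _ ⟨n, rfl⟩; exact (hs n).1⟩⟩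
  obtain ⟨c, hc⟩ := hconv
  exact ⟨c, isClosed_Icc.mem_of_tendsto hc (Eventually.of_forall hs), hc⟩

theorem continuousOn_of_abs_sub_le_mul {s : Set ℝ} {h : ℝ → ℝ} {L : ℝ}
    (hlip : ∀ x ∈ s, ∀ y ∈ s, |h x - h y| ≤ L * |x - y|) : ContinuousOn h s := by
  refine (LipschitzOnWith.of_dist_le_mul (K := L.toNNReal) fun u hu v hv => ?_).continuousOn
  simp only [Real.dist_eq, Real.coe_toNNReal']
  exact (hlip u hu v hv).trans (mul_le_mul_of_nonneg_right (le_max_left _ _) (abs_nonneg _))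

def averagedMap (t : ℝ) (h : ℝ → ℝ) (u : ℝ) : ℝ := (1 - t) * u + t * h u

theorem averagedMap_monotoneOn {s : Set ℝ} {h : ℝ → ℝ} {L t : ℝ}
    (hlip : ∀ x ∈ s, ∀ y ∈ s, |h x - h y| ≤ L * |x - y|) (ht0 : 0 ≤ t)
    (htL : t * (1 + L) ≤ 1) : MonotoneOn (averagedMap t h) s := by
  intro u hu v hv huv
  have hh : h u - h v ≤ L * (v - u) := by
    have := (abs_le.mp (hlip v hv u hu)).1
    rw [abs_of_nonneg (sub_nonneg.mpr huv)] at this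
    linarith
  have : 0 ≤ (1 - t * (1 + L)) * (v - u) := mul_nonneg (by linarith) (by linarith)
  simp only [averagedMap]
  nlinarith

theorem averagedMap_eq_self_iff {t : ℝ} (ht : t ≠ 0) (h : ℝ → ℝ) (c : ℝ) :
    averagedMap t h c = c ↔ h c = c := by
  simp only [averagedMap]
  constructor
  · intro hc
    have : t * (h c - c) = 0 := by linarith
    linarith [(mul_eq_zero.mp this).resolve_left ht]
  · intro hc
    rw [hc]
    ring

theorem stmt_3_general (L a b t : ℝ) (h : ℝ → ℝ)
    (hlip : ∀ x ∈ Set.Icc a b, ∀ y ∈ Set.Icc a b, |h x - h y| ≤ L * |x - y|)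
    (ht0 : 0 < t) (ht1 : t ≤ 1 / (1 + L))
    (x : ℕ → ℝ)
    (hrec : ∀ n, x n ∈ Set.Icc a b → x (n + 1) = (1 - t) * x n + t * h (x n)) :
    ((∀ i j : ℕ, i ≤ j → (∀ k < j, x k ∈ Set.Icc a b) → x i ≤ x j) ∨
      (∀ i j : ℕ, i ≤ j → (∀ k < j, x k ∈ Set.Icc a b) → x j ≤ x i)) ∧
      (((∀ n, x n ∈ Set.Icc a b) ∧
          ∃ c ∈ Set.Icc a b, h c = c ∧ Filter.Tendsto x Filter.atTop (nhds c)) ∨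
        ∃ n, x n ∉ Set.Icc a b) := by
  have h1L : 0 < 1 + L := one_div_pos.mp (ht0.trans_le ht1)
  have htL : t * (1 + L) ≤ 1 := (le_div_iff₀ h1L).mp (by simpa only [one_div] using ht1)
  have hg := averagedMap_monotoneOn hlip ht0.le htL
  have hmono : (∀ i j : ℕ, i ≤ j → (∀ k < j, x k ∈ Icc a b) → x i ≤ x j) ∨
      (∀ i j : ℕ, i ≤ j → (∀ k < j, x k ∈ Icc a b) → x j ≤ x i) := by
    rcases le_total (x 0) (averagedMap t h (x 0)) with h0 | h0
    · exact .inl fun _ _ hij hs => hg.orbit_le_of_le hrec h0 hij hs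
    · exact .inr fun _ _ hij hs => hg.orbit_ge_of_le hrec h0 hij hs
  refine ⟨hmono, ?_⟩
  by_cases hall : ∀ n, x n ∈ Icc a b
  · obtain ⟨c, hc, hlim⟩ := exists_tendsto_of_monotone_or_antitone
      (hmono.imp (fun H _ _ hij => H _ _ hij fun k _ => hall k)
        (fun H _ _ hij => H _ _ hij fun k _ => hall k)) hall
    have hcont : ContinuousOn (averagedMap t h) (Icc a b) :=
      (continuousOn_id.const_smul (1 - t)).add
        ((continuousOn_of_abs_sub_le_mul hlip).const_smul t)
    have hfix := eq_of_tendsto_orbit (hcont c hc) hall (fun n => hrec n (hall n)) hlim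
    exact .inl ⟨hall, c, hc, (averagedMap_eq_self_iff ht0.ne' h c).mp hfix, hlim⟩
  · exact .inr (not_forall.mp hall)

/-- Krasnoselskii iteration for a non-self L-Lipschitz map on `[a,b]`:
the iterates (defined as long as they stay in `[a,b]`) form a monotone
sequence, and either all iterates remain in `[a,b]` and the sequence
converges to a fixed point of `h`, or some iterate exits `[a,b]`. -/
theorem stmt_3 (L a b t : ℝ) (hL : 0 < L) (hab : a < b) (h : ℝ → ℝ)
    (hlip : ∀ x ∈ Set.Icc a b, ∀ y ∈ Set.Icc a b, |h x - h y| ≤ L * |x - y|)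
    (ht0 : 0 < t) (ht1 : t ≤ 1 / (1 + L))
    (x : ℕ → ℝ) (hx0 : x 0 ∈ Set.Icc a b)
    (hrec : ∀ n, x n ∈ Set.Icc a b → x (n + 1) = (1 - t) * x n + t * h (x n)) :
    ((∀ i j : ℕ, i ≤ j → (∀ k < j, x k ∈ Set.Icc a b) → x i ≤ x j) ∨
      (∀ i j : ℕ, i ≤ j → (∀ k < j, x k ∈ Set.Icc a b) → x j ≤ x i)) ∧
      (((∀ n, x n ∈ Set.Icc a b) ∧
          ∃ c ∈ Set.Icc a b, h c = c ∧ Filter.Tendsto x Filter.atTop (nhds c)) ∨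
        ∃ n, x n ∉ Set.Icc a b) :=
  stmt_3_general L a b t h hlip ht0 ht1 x hrec
end

section
/- Let L > 0, let a < b be real numbers, and let h : [a,b] → [a,b] be a continuous function satisfying the one-sided Lipschitz lower bound (h(x) − h(y))/(x − y) ≥ −L for all x, y ∈ [a,b] with x ≠ y. Fix t with 0 < t ≤ 1/(1+L), let x₀ ∈ [a,b], and define x_{n+1} = (1−t)·x_n + t·h(x_n) for all n ≥ 0. Then the sequence (x_n) is monotone and converges to a fixed point of h. -/
/-- Hillam's theorem under the weaker one-sided Lipschitz lower bound
`(h x - h y)/(x - y) ≥ -L`: the Krasnoselskii iteration is monotone and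
converges to a fixed point. -/
theorem stmt_5 (L a b t : ℝ) (hL : 0 < L) (hab : a < b) (h : ℝ → ℝ)
    (hmaps : ∀ x ∈ Set.Icc a b, h x ∈ Set.Icc a b)
    (hcont : ContinuousOn h (Set.Icc a b))
    (hosl : ∀ x ∈ Set.Icc a b, ∀ y ∈ Set.Icc a b, x ≠ y →
      (h x - h y) / (x - y) ≥ -L)
    (ht0 : 0 < t) (ht1 : t ≤ 1 / (1 + L))
    (x : ℕ → ℝ) (hx0 : x 0 ∈ Set.Icc a b)
    (hrec : ∀ n, x (n + 1) = (1 - t) * x n + t * h (x n)) :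
    (Monotone x ∨ Antitone x) ∧
      ∃ c ∈ Set.Icc a b, h c = c ∧ Filter.Tendsto x Filter.atTop (nhds c) := by
  have hL1 : (0:ℝ) < 1 + L := by linarith
  have htL : t * (1 + L) ≤ 1 := by
    rw [le_div_iff₀ hL1] at ht1; linarith
  have ht1' : t ≤ 1 := by nlinarith
  have xmem : ∀ n, x n ∈ Set.Icc a b := by
    intro n
    induction n with
    | zero => exact hx0
    | succ n ih =>
      obtain ⟨h3, h4⟩ := hmaps _ ih
      obtain ⟨h1, h2⟩ := ih
      rw [hrec]
      constructor <;> nlinarith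
  have gmono : ∀ u ∈ Set.Icc a b, ∀ v ∈ Set.Icc a b, u ≤ v →
      (1 - t) * u + t * h u ≤ (1 - t) * v + t * h v := by
    intro u hu v hv huv
    rcases eq_or_lt_of_le huv with rfl | hlt
    · exact le_refl _
    · have hd := hosl v hv u hu (ne_of_gt hlt)
      rw [ge_iff_le, le_div_iff₀ (by linarith : (0:ℝ) < v - u)] at hd
      nlinarith
  have fixedpt : ∀ c ∈ Set.Icc a b, Filter.Tendsto x Filter.atTop (nhds c) → h c = c := by
    intro c hc hlim
    have h1 : Filter.Tendsto (fun n => x (n + 1)) Filter.atTop (nhds c) :=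
      hlim.comp (Filter.tendsto_add_atTop_nat 1)
    have h2 : Filter.Tendsto (fun n => h (x n)) Filter.atTop (nhds (h c)) := by
      have hw : Filter.Tendsto x Filter.atTop (nhdsWithin c (Set.Icc a b)) :=
        tendsto_nhdsWithin_of_tendsto_nhds_of_eventually_within x hlim
          (Filter.Eventually.of_forall xmem)
      exact ((hcont c hc).tendsto).comp hw
    have h3 : Filter.Tendsto (fun n => (1 - t) * x n + t * h (x n)) Filter.atTop
        (nhds ((1 - t) * c + t * h c)) :=
      (tendsto_const_nhds.mul hlim).add (tendsto_const_nhds.mul h2)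
    have h4 : (1 - t) * c + t * h c = c := by
      refine tendsto_nhds_unique ?_ h1
      simpa [← hrec] using h3
    have h5 : t * h c = t * c := by linarith
    exact mul_left_cancel₀ (ne_of_gt ht0) h5
  rcases le_total (x 0) (x 1) with h01 | h01
  · have hm : Monotone x := by
      refine monotone_nat_of_le_succ ?_
      intro n
      induction n with
      | zero => exact h01
      | succ n ih =>
        have := gmono _ (xmem n) _ (xmem (n + 1)) ih
        rw [← hrec n, ← hrec (n + 1)] at this
        exact this
    have hbdd : BddAbove (Set.range x) :=
      ⟨b, by rintro y ⟨n, rfl⟩; exact (xmem n).2⟩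
    have hlim : Filter.Tendsto x Filter.atTop (nhds (⨆ n, x n)) :=
      tendsto_atTop_ciSup hm hbdd
    have hc : (⨆ n, x n) ∈ Set.Icc a b :=
      ⟨le_trans (xmem 0).1 (le_ciSup hbdd 0), ciSup_le fun n => (xmem n).2⟩
    exact ⟨Or.inl hm, ⟨_, hc, fixedpt _ hc hlim, hlim⟩⟩
  · have hm : Antitone x := by
      refine antitone_nat_of_succ_le ?_
      intro n
      induction n with
      | zero => exact h01
      | succ n ih =>
        have := gmono _ (xmem (n + 1)) _ (xmem n) ih
        rw [← hrec n, ← hrec (n + 1)] at this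
        exact this
    have hbdd : BddBelow (Set.range x) :=
      ⟨a, by rintro y ⟨n, rfl⟩; exact (xmem n).1⟩
    have hlim : Filter.Tendsto x Filter.atTop (nhds (⨅ n, x n)) :=
      tendsto_atTop_ciInf hm hbdd
    have hc : (⨅ n, x n) ∈ Set.Icc a b :=
      ⟨le_ciInf fun n => (xmem n).1, le_trans (ciInf_le hbdd 0) (xmem 0).2⟩
    exact ⟨Or.inr hm, ⟨_, hc, fixedpt _ hc hlim, hlim⟩⟩
end

section
/- Let a < c be real numbers and let h be a continuous real-valued function on [a,c] that is differentiable on (a,c) with h′(x) ≥ −1 for all x ∈ (a,c), such that h(x) > x for every x ∈ [a,c) and c is the unique fixed point of h in [a,c]. Let x₀ ∈ [a,c) and define x_{n+1} = (x_n + h(x_n))/2 for all n ≥ 0. Then the sequence (x_n) converges to c. -/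
/-- Mean iteration for a continuous map on `[a,c]`, differentiable on `(a,c)`
with derivative `≥ -1`, `h x > x` on `[a,c)` and `c` the unique fixed point:
the iterates converge to `c`. -/
theorem stmt_6 (a c : ℝ) (hac : a < c) (h h' : ℝ → ℝ)
    (hcont : ContinuousOn h (Set.Icc a c))
    (hderiv : ∀ x ∈ Set.Ioo a c, HasDerivAt h (h' x) x)
    (hge : ∀ x ∈ Set.Ioo a c, h' x ≥ -1)
    (hgt : ∀ x ∈ Set.Ico a c, h x > x)
    (hfix : h c = c)
    (huniq : ∀ x ∈ Set.Icc a c, h x = x → x = c)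
    (x : ℕ → ℝ) (hx0 : x 0 ∈ Set.Ico a c)
    (hrec : ∀ n, x (n + 1) = (x n + h (x n)) / 2) :
    Filter.Tendsto x Filter.atTop (nhds c) := by
  set g : ℝ → ℝ := fun y => (y + h y) / 2 with hg
  have hgcont : ContinuousOn g (Set.Icc a c) :=
    (continuousOn_id.add hcont).div_const 2
  have hgderiv : ∀ y ∈ Set.Ioo a c, HasDerivAt g ((1 + h' y) / 2) y := by
    intro y hy
    exact ((hasDerivAt_id y).add (hderiv y hy)).div_const 2
  have hgmono : MonotoneOn g (Set.Icc a c) := by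
    apply monotoneOn_of_deriv_nonneg (convex_Icc a c) hgcont
    · intro y hy
      rw [interior_Icc] at hy
      exact (hgderiv y hy).differentiableAt.differentiableWithinAt
    · intro y hy
      rw [interior_Icc] at hy
      rw [(hgderiv y hy).deriv]
      have := hge y hy
      linarith
  -- h y ≥ y on Icc a c
  have hge' : ∀ y ∈ Set.Icc a c, y ≤ h y := by
    intro y hy
    rcases eq_or_lt_of_le hy.2 with heq | hlt
    · rw [heq, hfix]
    · exact le_of_lt (hgt y ⟨hy.1, hlt⟩)
  have hgc : g c = c := by simp [hg, hfix]
  -- invariance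
  have hmem : ∀ n, x n ∈ Set.Icc a c := by
    intro n
    induction n with
    | zero => exact ⟨hx0.1, le_of_lt hx0.2⟩
    | succ k ih =>
      rw [hrec k]
      constructor
      · have := hge' _ ih
        have : x k ≤ (x k + h (x k)) / 2 := by linarith
        linarith [ih.1]
      · have := hgmono ih (Set.right_mem_Icc.mpr (le_of_lt hac)) ih.2
        rw [hgc] at this
        exact this
  have hmonox : Monotone x := by
    apply monotone_nat_of_le_succ
    intro n
    rw [hrec n]
    have := hge' _ (hmem n)
    linarith
  have hbdd : BddAbove (Set.range x) := ⟨c, by rintro _ ⟨n, rfl⟩; exact (hmem n).2⟩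
  set L : ℝ := ⨆ n, x n with hL
  have htend : Filter.Tendsto x Filter.atTop (nhds L) :=
    tendsto_atTop_ciSup hmonox hbdd
  have hLmem : L ∈ Set.Icc a c := by
    constructor
    · exact le_trans (hmem 0).1 (le_ciSup hbdd 0)
    · exact ciSup_le fun n => (hmem n).2
  -- L is a fixed point of h
  have htendW : Filter.Tendsto x Filter.atTop (nhdsWithin L (Set.Icc a c)) := by
    apply tendsto_nhdsWithin_of_tendsto_nhds_of_eventually_within _ htend
    exact Filter.Eventually.of_forall hmem
  have htendh : Filter.Tendsto (fun n => h (x n)) Filter.atTop (nhds (h L)) :=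
    (hcont L hLmem).tendsto.comp htendW
  have htend2 : Filter.Tendsto (fun n => x (n + 1)) Filter.atTop (nhds ((L + h L) / 2)) := by
    simp only [hrec]
    exact ((htend.add htendh).div_const 2)
  have htend2' : Filter.Tendsto (fun n => x (n + 1)) Filter.atTop (nhds L) :=
    htend.comp (Filter.tendsto_add_atTop_nat 1)
  have heq : (L + h L) / 2 = L := tendsto_nhds_unique htend2 htend2'
  have hfixL : h L = L := by linarith
  have : L = c := huniq L hLmem hfixL
  rwa [this] at htend
end

section
/- Let c < b be real numbers and let h be a continuous real-valued function on [c,b] that is differentiable on (c,b) with h′(x) ≥ −1 for all x ∈ (c,b), such that h(x) < x for every x ∈ (c,b] and c is the unique fixed point of h in [c,b]. Let x₀ ∈ (c,b] and define x_{n+1} = (x_n + h(x_n))/2 for all n ≥ 0. Then the sequence (x_n) converges to c. -/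
/-- Mean iteration for a continuous map on `[c,b]`, differentiable on `(c,b)`
with derivative `≥ -1`, `h x < x` on `(c,b]` and `c` the unique fixed point:
the iterates converge to `c`. -/
theorem stmt_7 (b c : ℝ) (hcb : c < b) (h h' : ℝ → ℝ)
    (hcont : ContinuousOn h (Set.Icc c b))
    (hderiv : ∀ x ∈ Set.Ioo c b, HasDerivAt h (h' x) x)
    (hge : ∀ x ∈ Set.Ioo c b, h' x ≥ -1)
    (hlt : ∀ x ∈ Set.Ioc c b, h x < x)
    (hfix : h c = c)
    (huniq : ∀ x ∈ Set.Icc c b, h x = x → x = c)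
    (x : ℕ → ℝ) (hx0 : x 0 ∈ Set.Ioc c b)
    (hrec : ∀ n, x (n + 1) = (x n + h (x n)) / 2) :
    Filter.Tendsto x Filter.atTop (nhds c) := by
  -- MVT lower bound: h y ≥ 2c - y on [c,b]
  have hlow : ∀ y ∈ Set.Icc c b, 2 * c - y ≤ h y := by
    intro y hy
    rcases eq_or_lt_of_le hy.1 with rfl | hcy
    · simp [hfix]; linarith
    · obtain ⟨ξ, hξ, hslope⟩ := exists_hasDerivAt_eq_slope h h' hcy
        (hcont.mono (Set.Icc_subset_Icc le_rfl hy.2))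
        (fun z hz => hderiv z ⟨hz.1, lt_of_lt_of_le hz.2 hy.2⟩)
      have hξ' : h' ξ ≥ -1 := hge ξ ⟨hξ.1, lt_of_lt_of_le hξ.2 hy.2⟩
      rw [hfix] at hslope
      have hyc : (0:ℝ) < y - c := by linarith
      have : -1 ≤ (h y - c) / (y - c) := hslope ▸ hξ'
      rw [le_div_iff₀ hyc] at this
      linarith
  -- one step stays in [c, y]
  have hstep : ∀ y ∈ Set.Icc c b, c ≤ (y + h y) / 2 ∧ (y + h y) / 2 ≤ y := by
    intro y hy
    have hl := hlow y hy
    have hu : h y ≤ y := by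
      rcases eq_or_lt_of_le hy.1 with rfl | hcy
      · simp [hfix]
      · exact le_of_lt (hlt y ⟨hcy, hy.2⟩)
    constructor <;> linarith
  -- all iterates in [c,b]
  have hmem : ∀ n, x n ∈ Set.Icc c b := by
    intro n
    induction n with
    | zero => exact ⟨le_of_lt hx0.1, hx0.2⟩
    | succ n ih =>
      obtain ⟨h1, h2⟩ := hstep (x n) ih
      rw [hrec n]
      exact ⟨h1, le_trans h2 ih.2⟩
  have hanti : Antitone x := by
    apply antitone_nat_of_succ_le
    intro n
    rw [hrec n]
    exact (hstep (x n) (hmem n)).2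
  have hbdd : BddBelow (Set.range x) := ⟨c, by rintro _ ⟨n, rfl⟩; exact (hmem n).1⟩
  have htend : Filter.Tendsto x Filter.atTop (nhds (⨅ n, x n)) :=
    tendsto_atTop_ciInf hanti hbdd
  set L := ⨅ n, x n with hL
  have hLmem : L ∈ Set.Icc c b := by
    constructor
    · exact le_ciInf fun n => (hmem n).1
    · exact le_trans (ciInf_le ⟨c, by rintro _ ⟨n, rfl⟩; exact (hmem n).1⟩ 0) (hmem 0).2
  -- pass to the limit in the recurrence
  have htendh : Filter.Tendsto (fun n => h (x n)) Filter.atTop (nhds (h L)) := by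
    apply ((hcont L hLmem).tendsto).comp
    rw [tendsto_nhdsWithin_iff]
    exact ⟨htend, Filter.Eventually.of_forall hmem⟩
  have h1 : Filter.Tendsto (fun n => x (n + 1)) Filter.atTop (nhds L) :=
    htend.comp (Filter.tendsto_add_atTop_nat 1)
  have h2 : Filter.Tendsto (fun n => (x n + h (x n)) / 2) Filter.atTop
      (nhds ((L + h L) / 2)) := (htend.add htendh).div_const 2
  have heq : L = (L + h L) / 2 :=
    tendsto_nhds_unique h1 (by simpa only [hrec] using h2)
  have hfixL : h L = L := by linarith
  have : L = c := huniq L hLmem hfixL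
  rwa [this] at htend
end

section
/- Let a < c be real numbers and let h : [a,c] → ℝ be a function such that c is the unique root of h in [a,c], h is differentiable on [a,c] with h′(x) ≠ 0 for every x ∈ [a,c], h′′(x) exists for every x ∈ (a,c), h(x)·h′′(x) ≥ 0 for all x ∈ (a,c), and h(x)·h′(x) < 0 for all x ∈ [a,c). For any x₀ ∈ [a,c], define the Newton–Raphson iteration x_{n+1} = x_n − h(x_n)/h′(x_n) for all n ≥ 0. Then the sequence (x_n) converges to c, and h(c) = 0. -/
/-!
Replacing `h` by `-h` we may assume `h a > 0`. As `c` is the only root, `h > 0` on `[a, c)`, so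
`h' < 0` there and `h'' ≥ 0` makes `h` convex. Convexity keeps the tangent at `xₙ` below the graph,
so a Newton step from `xₙ ∈ [a, c)` lands in `[xₙ, c]`: the iterates increase to a limit `L ≤ c`.
The derivative of a convex function is monotone, hence `h'` is bounded on `[a, c]`, and
`h (xₙ) = h' (xₙ) * (xₙ - xₙ₊₁) → 0`; thus `h L = 0` and `L = c`.
-/

open Set Filter Topology

lemma ConvexOn.monotoneOn_of_hasDerivWithinAt {S : Set ℝ} {f f' : ℝ → ℝ}
    (hf : ConvexOn ℝ S f) (hd : ∀ t ∈ S, HasDerivWithinAt f (f' t) S t) : MonotoneOn f' S := by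
  intro s hs t ht hst
  rcases hst.eq_or_lt with rfl | hst
  · rfl
  exact (hf.le_slope_of_hasDerivWithinAt hs ht hst (hd s hs)).trans
    (hf.slope_le_of_hasDerivWithinAt hs ht hst (hd t ht))

lemma ConvexOn.sub_div_le_of_hasDerivWithinAt {S : Set ℝ} {f : ℝ → ℝ} {t c d : ℝ}
    (hf : ConvexOn ℝ S f) (ht : t ∈ S) (hc : c ∈ S) (htc : t < c) (hroot : f c = 0)
    (hd : HasDerivWithinAt f d S t) (hd_neg : d < 0) : t - f t / d ≤ c := by
  have hslope : d ≤ slope f t c := hf.le_slope_of_hasDerivWithinAt ht hc htc hd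
  rw [slope_def_field, hroot, le_div_iff₀ (sub_pos.2 htc)] at hslope
  have : -f t / d ≤ c - t := (div_le_iff_of_neg hd_neg).2 (by linarith)
  linarith [neg_div d (f t)]

lemma eq_zero_of_tendsto_newton {S : Set ℝ} {f f' : ℝ → ℝ} {x : ℕ → ℝ} {L M : ℝ}
    (hf : ContinuousWithinAt f S L) (hxS : ∀ n, x n ∈ S) (hf'M : ∀ t ∈ S, |f' t| ≤ M)
    (hf'ne : ∀ t ∈ S, f' t ≠ 0) (hrec : ∀ n, x (n + 1) = x n - f (x n) / f' (x n))
    (hx : Tendsto x atTop (𝓝 L)) : f L = 0 := by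
  have hfx : Tendsto (fun n ↦ f (x n)) atTop (𝓝 (f L)) :=
    hf.tendsto.comp (tendsto_nhdsWithin_iff.2 ⟨hx, .of_forall hxS⟩)
  have hstep : Tendsto (fun n ↦ x n - x (n + 1)) atTop (𝓝 0) := by
    simpa using hx.sub (hx.comp (tendsto_add_atTop_nat 1))
  have hfx0 : Tendsto (fun n ↦ f (x n)) atTop (𝓝 0) := by
    refine squeeze_zero_norm (fun n ↦ ?_) (by simpa using hstep.abs.const_mul M)
    have hfx_eq : f (x n) = f' (x n) * (x n - x (n + 1)) := by
      rw [hrec n, sub_sub_cancel, mul_div_cancel₀ _ (hf'ne _ (hxS n))]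
    calc ‖f (x n)‖ = |f' (x n)| * |x n - x (n + 1)| := by rw [Real.norm_eq_abs, hfx_eq, abs_mul]
      _ ≤ M * |x n - x (n + 1)| := by gcongr; exact hf'M _ (hxS n)
  exact tendsto_nhds_unique hfx hfx0

theorem ConvexOn.tendsto_newton {a c : ℝ} {f f' : ℝ → ℝ} {x : ℕ → ℝ}
    (hf : ConvexOn ℝ (Icc a c) f) (hd : ∀ t ∈ Icc a c, HasDerivWithinAt f (f' t) (Icc a c) t)
    (hf'ne : ∀ t ∈ Icc a c, f' t ≠ 0) (hf'neg : ∀ t ∈ Ico a c, f' t < 0)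
    (hfpos : ∀ t ∈ Ico a c, 0 < f t) (hroot : f c = 0)
    (huniq : ∀ t ∈ Icc a c, f t = 0 → t = c)
    (hx0 : x 0 ∈ Icc a c) (hrec : ∀ n, x (n + 1) = x n - f (x n) / f' (x n)) :
    Tendsto x atTop (𝓝 c) := by
  have hac : a ≤ c := hx0.1.trans hx0.2
  have hstep : ∀ t ∈ Icc a c, t ≤ t - f t / f' t ∧ t - f t / f' t ≤ c := by
    rintro t ⟨hat, htc⟩
    rcases htc.eq_or_lt with rfl | htc
    · simp [hroot]
    have hneg := hf'neg t ⟨hat, htc⟩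
    exact ⟨(le_sub_self_iff t).2 <|
        div_nonpos_of_nonneg_of_nonpos (hfpos t ⟨hat, htc⟩).le hneg.le,
      hf.sub_div_le_of_hasDerivWithinAt ⟨hat, htc.le⟩ ⟨hac, le_rfl⟩ htc hroot
        (hd t ⟨hat, htc.le⟩) hneg⟩
  have hmem : ∀ n, x n ∈ Icc a c := by
    intro n
    induction n with
    | zero => exact hx0
    | succ n ih => rw [hrec n]; exact ⟨ih.1.trans (hstep _ ih).1, (hstep _ ih).2⟩
  have hmono : Monotone x := monotone_nat_of_le_succ fun n ↦ by
    rw [hrec n]; exact (hstep _ (hmem n)).1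
  have hbdd : BddAbove (range x) := ⟨c, by rintro _ ⟨n, rfl⟩; exact (hmem n).2⟩
  have hlim : Tendsto x atTop (𝓝 (⨆ n, x n)) := tendsto_atTop_ciSup hmono hbdd
  have hL : (⨆ n, x n) ∈ Icc a c := isClosed_Icc.mem_of_tendsto hlim (.of_forall hmem)
  have hmon : MonotoneOn f' (Icc a c) := hf.monotoneOn_of_hasDerivWithinAt hd
  have hf'M : ∀ t ∈ Icc a c, |f' t| ≤ max |f' a| |f' c| := fun t ht ↦
    abs_le_max_abs_abs (hmon ⟨le_rfl, hac⟩ ht ht.1) (hmon ht ⟨hac, le_rfl⟩ ht.2)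
  have hfL : f (⨆ n, x n) = 0 :=
    eq_zero_of_tendsto_newton (hd _ hL).continuousWithinAt hmem hf'M hf'ne hrec hlim
  rwa [huniq _ hL hfL] at hlim

lemma ContinuousOn.pos_of_ne_zero_Ico {f : ℝ → ℝ} {a c : ℝ} (hf : ContinuousOn f (Icc a c))
    (ha : 0 < f a) (hne : ∀ t ∈ Ico a c, f t ≠ 0) {t : ℝ} (ht : t ∈ Ico a c) : 0 < f t := by
  by_contra! hneg
  have hsub : Icc a t ⊆ Icc a c := Icc_subset_Icc le_rfl ht.2.le
  obtain ⟨s, hs, hs0⟩ := intermediate_value_Icc' ht.1 (hf.mono hsub) ⟨hneg, ha.le⟩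
  exact hne s ⟨hs.1, hs.2.trans_lt ht.2⟩ hs0

theorem tendsto_newton_of_pos {a c : ℝ} {h h' h'' : ℝ → ℝ} {x : ℕ → ℝ}
    (hroot : h c = 0) (huniq : ∀ t ∈ Icc a c, h t = 0 → t = c)
    (hd1 : ∀ t ∈ Icc a c, HasDerivWithinAt h (h' t) (Icc a c) t)
    (hd1ne : ∀ t ∈ Icc a c, h' t ≠ 0) (hd2 : ∀ t ∈ Ioo a c, HasDerivAt h' (h'' t) t)
    (hconv : ∀ t ∈ Ioo a c, 0 ≤ h t * h'' t) (hsign : ∀ t ∈ Ico a c, h t * h' t < 0)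
    (hpos : 0 < h a) (hx0 : x 0 ∈ Icc a c) (hrec : ∀ n, x (n + 1) = x n - h (x n) / h' (x n)) :
    Tendsto x atTop (𝓝 c) := by
  have hcont : ContinuousOn h (Icc a c) := fun t ht ↦ (hd1 t ht).continuousWithinAt
  have hhpos : ∀ t ∈ Ico a c, 0 < h t := fun t ht ↦
    hcont.pos_of_ne_zero_Ico hpos (fun s hs h0 ↦ hs.2.ne (huniq s (Ico_subset_Icc_self hs) h0)) ht
  have hcvx : ConvexOn ℝ (Icc a c) h := by
    refine convexOn_of_hasDerivWithinAt2_nonneg (convex_Icc a c) hcont (f' := h') (f'' := h'')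
      ?_ ?_ ?_ <;> rw [interior_Icc] <;> intro t ht
    · exact (hd1 t (Ioo_subset_Icc_self ht)).mono Ioo_subset_Icc_self
    · exact (hd2 t ht).hasDerivWithinAt
    · exact nonneg_of_mul_nonneg_right (hconv t ht) (hhpos t (Ioo_subset_Ico_self ht))
  exact hcvx.tendsto_newton hd1 hd1ne
    (fun t ht ↦ neg_of_mul_neg_right (hsign t ht) (hhpos t ht).le) hhpos hroot huniq hx0 hrec

/-- Global convergence of the Newton–Raphson method on `[a,c]` where `c` is
the unique root, `h·h'' ≥ 0` on `(a,c)` and `h·h' < 0` on `[a,c)`. -/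
theorem stmt_8 (a c : ℝ) (hac : a < c) (h h' h'' : ℝ → ℝ)
    (hroot : h c = 0)
    (huniq : ∀ x ∈ Set.Icc a c, h x = 0 → x = c)
    (hd1 : ∀ x ∈ Set.Icc a c, HasDerivWithinAt h (h' x) (Set.Icc a c) x)
    (hd1ne : ∀ x ∈ Set.Icc a c, h' x ≠ 0)
    (hd2 : ∀ x ∈ Set.Ioo a c, HasDerivAt h' (h'' x) x)
    (hconv : ∀ x ∈ Set.Ioo a c, h x * h'' x ≥ 0)
    (hsign : ∀ x ∈ Set.Ico a c, h x * h' x < 0)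
    (x : ℕ → ℝ) (hx0 : x 0 ∈ Set.Icc a c)
    (hrec : ∀ n, x (n + 1) = x n - h (x n) / h' (x n)) :
    Filter.Tendsto x Filter.atTop (nhds c) ∧ h c = 0 := by
  refine ⟨?_, hroot⟩
  have ha : h a ≠ 0 := fun h0 ↦ by simpa [h0] using hsign a ⟨le_rfl, hac⟩
  rcases ha.lt_or_gt with hneg | hpos
  · exact tendsto_newton_of_pos (h := (-h ·)) (h' := (-h' ·)) (h'' := (-h'' ·))
      (by simp [hroot]) (fun t ht h0 ↦ huniq t ht (neg_eq_zero.1 h0))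
      (fun t ht ↦ (hd1 t ht).neg) (fun t ht ↦ neg_ne_zero.2 (hd1ne t ht))
      (fun t ht ↦ (hd2 t ht).neg) (fun t ht ↦ by simpa using hconv t ht)
      (fun t ht ↦ by simpa using hsign t ht) (neg_pos.2 hneg) hx0
      (fun n ↦ by rw [hrec n, neg_div_neg_eq])
  · exact tendsto_newton_of_pos hroot huniq hd1 hd1ne hd2 hconv hsign hpos hx0 hrec
end

section
/- Let c < b be real numbers and let h : [c,b] → ℝ be a function such that c is the unique root of h in [c,b], h is differentiable on [c,b] with h′(x) ≠ 0 for every x ∈ [c,b], h′′(x) exists for every x ∈ (c,b), h(x)·h′′(x) ≥ 0 for all x ∈ (c,b), and h(x)·h′(x) > 0 for all x ∈ (c,b]. For any x₀ ∈ [c,b], define the Newton–Raphson iteration x_{n+1} = x_n − h(x_n)/h′(x_n) for all n ≥ 0. Then the sequence (x_n) converges to c, and h(c) = 0. -/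
open Set Filter

/-- Newton convergence in the case `h > 0` on `(c,b]`. -/
lemma newton_aux (b c : ℝ) (hcb : c < b) (h h' h'' : ℝ → ℝ)
    (hroot : h c = 0)
    (huniq : ∀ x ∈ Set.Icc c b, h x = 0 → x = c)
    (hd1 : ∀ x ∈ Set.Icc c b, HasDerivWithinAt h (h' x) (Set.Icc c b) x)
    (hd1ne : ∀ x ∈ Set.Icc c b, h' x ≠ 0)
    (hd2 : ∀ x ∈ Set.Ioo c b, HasDerivAt h' (h'' x) x)
    (hconv : ∀ x ∈ Set.Ioo c b, h x * h'' x ≥ 0)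
    (hsign : ∀ x ∈ Set.Ioc c b, h x * h' x > 0)
    (hpos : ∀ x ∈ Set.Ioc c b, 0 < h x)
    (x : ℕ → ℝ) (hx0 : x 0 ∈ Set.Icc c b)
    (hrec : ∀ n, x (n + 1) = x n - h (x n) / h' (x n)) :
    Filter.Tendsto x Filter.atTop (nhds c) := by
  have hcont : ContinuousOn h (Set.Icc c b) := fun y hy => (hd1 y hy).continuousWithinAt
  have hposd : ∀ y ∈ Set.Ioc c b, 0 < h' y := by
    intro y hy
    nlinarith [hsign y hy, hpos y hy]
  have hdAt : ∀ y ∈ Set.Ioo c b, HasDerivAt h (h' y) y := fun y hy =>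
    (hd1 y (Set.Ioo_subset_Icc_self hy)).hasDerivAt (Icc_mem_nhds hy.1 hy.2)
  have hdAt2 : ∀ y ∈ Set.Ioo c b, HasDerivAt (deriv h) (h'' y) y := by
    intro y hy
    apply (hd2 y hy).congr_of_eventuallyEq
    filter_upwards [isOpen_Ioo.mem_nhds hy] with z hz
    exact (hdAt z hz).deriv
  have hconvex : ConvexOn ℝ (Set.Icc c b) h := by
    apply convexOn_of_deriv2_nonneg (convex_Icc c b) hcont
    · rw [interior_Icc]
      exact fun y hy => ((hdAt y hy).differentiableAt).differentiableWithinAt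
    · rw [interior_Icc]
      exact fun y hy => ((hdAt2 y hy).differentiableAt).differentiableWithinAt
    · rw [interior_Icc]
      intro y hy
      have h2 : deriv^[2] h y = deriv (deriv h) y := by
        rw [Function.iterate_succ_apply', Function.iterate_one]
      rw [h2, (hdAt2 y hy).deriv]
      nlinarith [hconv y hy, hpos y ⟨hy.1, hy.2.le⟩]
  have hstep : ∀ y ∈ Set.Ioc c b, c ≤ y - h y / h' y ∧ y - h y / h' y < y := by
    intro y hy
    have hy' : 0 < h' y := hposd y hy
    have hyc : c < y := hy.1
    have hyI : y ∈ Set.Icc c b := ⟨hy.1.le, hy.2⟩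
    have hslope := hconvex.slope_le_of_hasDerivWithinAt (Set.left_mem_Icc.2 hcb.le) hyI hyc
      (hd1 y hyI)
    rw [slope_def_field, hroot, sub_zero] at hslope
    have h1 : h y ≤ h' y * (y - c) := by
      rw [div_le_iff₀ (by linarith : (0:ℝ) < y - c)] at hslope
      linarith
    have h2 : h y / h' y ≤ y - c := by
      rw [div_le_iff₀ hy']
      linarith [h1, mul_comm (h' y) (y - c)]
    have h3 : 0 < h y / h' y := div_pos (hpos y hy) hy'
    constructor <;> linarith
  have hmem : ∀ n, x n ∈ Set.Icc c b := by
    intro n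
    induction n with
    | zero => exact hx0
    | succ n ih =>
      rcases eq_or_lt_of_le ih.1 with heq | hlt
      · rw [hrec n, ← heq, hroot, zero_div, sub_zero]
        exact ⟨le_refl c, hcb.le⟩
      · have hs := hstep (x n) ⟨hlt, ih.2⟩
        rw [hrec n]
        exact ⟨hs.1, le_trans hs.2.le ih.2⟩
  have hanti : ∀ n, x (n + 1) ≤ x n := by
    intro n
    rcases eq_or_lt_of_le (hmem n).1 with heq | hlt
    · rw [hrec n, ← heq, hroot, zero_div, sub_zero]
    · rw [hrec n]
      exact (hstep (x n) ⟨hlt, (hmem n).2⟩).2.le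
  have hA : Antitone x := antitone_nat_of_succ_le hanti
  have hbdd : BddBelow (Set.range x) := ⟨c, by rintro v ⟨n, rfl⟩; exact (hmem n).1⟩
  set L := ⨅ n, x n with hLdef
  have hL : Filter.Tendsto x Filter.atTop (nhds L) := tendsto_atTop_ciInf hA hbdd
  have hcL : c ≤ L := le_ciInf fun n => (hmem n).1
  have hLle : ∀ n, L ≤ x n := fun n => ciInf_le hbdd n
  have hLc : L = c := by
    by_contra hne
    have hcltL : c < L := lt_of_le_of_ne hcL (Ne.symm hne)
    -- L < b
    have hx0Ioc : x 0 ∈ Set.Ioc c b := ⟨lt_of_lt_of_le hcltL (hLle 0), (hmem 0).2⟩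
    have hx1lt : x 1 < x 0 := by rw [hrec 0]; exact (hstep (x 0) hx0Ioc).2
    have hLb : L < b := lt_of_le_of_lt (hLle 1) (lt_of_lt_of_le hx1lt (hmem 0).2)
    have hLIoo : L ∈ Set.Ioo c b := ⟨hcltL, hLb⟩
    have hLIcc : L ∈ Set.Icc c b := Set.Ioo_subset_Icc_self hLIoo
    have hhL : Filter.Tendsto (fun n => h (x n)) Filter.atTop (nhds (h L)) :=
      ((hdAt L hLIoo).continuousAt.tendsto).comp hL
    have hh'L : Filter.Tendsto (fun n => h' (x n)) Filter.atTop (nhds (h' L)) :=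
      ((hd2 L hLIoo).continuousAt.tendsto).comp hL
    have hne' : h' L ≠ 0 := hd1ne L hLIcc
    have hdiv : Filter.Tendsto (fun n => h (x n) / h' (x n)) Filter.atTop
        (nhds (h L / h' L)) := hhL.div hh'L hne'
    have h1 : Filter.Tendsto (fun n => x (n + 1)) Filter.atTop (nhds L) :=
      hL.comp (tendsto_add_atTop_nat 1)
    have h2 : Filter.Tendsto (fun n => x n - h (x n) / h' (x n)) Filter.atTop
        (nhds (L - h L / h' L)) := hL.sub hdiv
    have heqf : (fun n => x (n + 1)) = fun n => x n - h (x n) / h' (x n) :=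
      funext fun n => hrec n
    rw [heqf] at h1
    have hLeq : L = L - h L / h' L := tendsto_nhds_unique h1 h2
    have hdiv0 : h L / h' L = 0 := by linarith
    have hhL0 : h L = 0 := by
      rcases div_eq_zero_iff.mp hdiv0 with h0 | h0
      · exact h0
      · exact absurd h0 hne'
    exact hne (huniq L hLIcc hhL0)
  rw [← hLc]
  exact hL

/-- Global convergence of the Newton–Raphson method on `[c,b]` where `c` is
the unique root, `h·h'' ≥ 0` on `(c,b)` and `h·h' > 0` on `(c,b]`. -/
theorem stmt_9 (b c : ℝ) (hcb : c < b) (h h' h'' : ℝ → ℝ)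
    (hroot : h c = 0)
    (huniq : ∀ x ∈ Set.Icc c b, h x = 0 → x = c)
    (hd1 : ∀ x ∈ Set.Icc c b, HasDerivWithinAt h (h' x) (Set.Icc c b) x)
    (hd1ne : ∀ x ∈ Set.Icc c b, h' x ≠ 0)
    (hd2 : ∀ x ∈ Set.Ioo c b, HasDerivAt h' (h'' x) x)
    (hconv : ∀ x ∈ Set.Ioo c b, h x * h'' x ≥ 0)
    (hsign : ∀ x ∈ Set.Ioc c b, h x * h' x > 0)
    (x : ℕ → ℝ) (hx0 : x 0 ∈ Set.Icc c b)
    (hrec : ∀ n, x (n + 1) = x n - h (x n) / h' (x n)) :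
    Filter.Tendsto x Filter.atTop (nhds c) ∧ h c = 0 := by
  refine ⟨?_, hroot⟩
  have hcont : ContinuousOn h (Set.Icc c b) := fun y hy => (hd1 y hy).continuousWithinAt
  have hbmem : b ∈ Set.Icc c b := Set.right_mem_Icc.2 hcb.le
  have hbne : h b ≠ 0 := fun h0 => absurd (huniq b hbmem h0) (ne_of_gt hcb)
  rcases lt_or_gt_of_ne hbne with hbneg | hbpos
  · -- h b < 0 : apply aux to -h
    apply newton_aux b c hcb (fun y => -h y) (fun y => -h' y) (fun y => -h'' y)
      (by simp [hroot])
      (fun y hy h0 => huniq y hy (by simpa using h0))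
      (fun y hy => (hd1 y hy).neg)
      (fun y hy => by simpa using hd1ne y hy)
      (fun y hy => (hd2 y hy).neg)
      (fun y hy => by simpa [mul_comm] using hconv y hy)
      (fun y hy => by simpa using hsign y hy)
      ?_ x hx0 ?_
    · intro y hy
      simp only [neg_pos]
      by_contra hge
      push_neg at hge
      have hyne : h y ≠ 0 := fun h0 => absurd (huniq y ⟨hy.1.le, hy.2⟩ h0) (ne_of_gt hy.1)
      have hypos : 0 < h y := lt_of_le_of_ne hge (Ne.symm hyne)
      -- IVT between y and b : h y > 0 > h b
      have hsub : Set.Icc y b ⊆ Set.Icc c b := Set.Icc_subset_Icc hy.1.le le_rfl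
      obtain ⟨z, hz, hz0⟩ := intermediate_value_Icc' hy.2 (hcont.mono hsub)
        (Set.mem_Icc.2 ⟨hbneg.le, hypos.le⟩)
      have hzc : z = c := huniq z (hsub hz) hz0
      have hlt : c < z := lt_of_lt_of_le hy.1 hz.1
      rw [hzc] at hlt
      exact lt_irrefl c hlt
    · intro n
      show x (n + 1) = x n - (-h (x n)) / (-h' (x n))
      rw [hrec n, neg_div_neg_eq]
  · -- h b > 0
    apply newton_aux b c hcb h h' h'' hroot huniq hd1 hd1ne hd2 hconv hsign ?_ x hx0 hrec
    intro y hy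
    by_contra hge
    push_neg at hge
    have hyne : h y ≠ 0 := fun h0 => absurd (huniq y ⟨hy.1.le, hy.2⟩ h0) (ne_of_gt hy.1)
    have hyneg : h y < 0 := lt_of_le_of_ne hge hyne
    have hsub : Set.Icc y b ⊆ Set.Icc c b := Set.Icc_subset_Icc hy.1.le le_rfl
    obtain ⟨z, hz, hz0⟩ := intermediate_value_Icc hy.2 (hcont.mono hsub)
      (Set.mem_Icc.2 ⟨hyneg.le, hbpos.le⟩)
    have hzc : z = c := huniq z (hsub hz) hz0
    have hlt : c < z := lt_of_lt_of_le hy.1 hz.1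
    rw [hzc] at hlt
    exact lt_irrefl c hlt
end

section
/- Let L > 0 and let h : ℝ → ℝ be an L-Lipschitz function (|h(x) − h(y)| ≤ L|x − y| for all x, y ∈ ℝ). Fix t with 0 < t ≤ 1/(1+L), let x₀ ∈ ℝ with h(x₀) > x₀, and suppose there exists a fixed point d of h with d > x₀. Let c be the smallest fixed point of h with c > x₀. Then the sequence defined by x_{n+1} = (1−t)·x_n + t·h(x_n) is nondecreasing and converges to c. -/
/-!
For `t (1 + L) ≤ 1` the averaged map `T z = (1 - t) z + t h z` is monotone, and its fixed points
are those of `h`. Since `x₀ < T x₀` and `T c = c`, the orbit of `x₀` increases and stays below `c`,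
so it converges to a fixed point of `T` in `(x₀, c]`, which by minimality of `c` is `c` itself.
-/

open Filter Function Topology

section AbsSubLeMul

variable {L : ℝ} {h : ℝ → ℝ}

theorem nonneg_of_abs_sub_le_mul (hlip : ∀ x y, |h x - h y| ≤ L * |x - y|) : 0 ≤ L := by
  simpa using (abs_nonneg _).trans (hlip 1 0)

theorem continuous_of_abs_sub_le_mul (hlip : ∀ x y, |h x - h y| ≤ L * |x - y|) :
    Continuous h := by
  refine (LipschitzWith.of_dist_le_mul
    (K := ⟨L, nonneg_of_abs_sub_le_mul hlip⟩) fun x y => ?_).continuous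
  rw [Real.dist_eq, Real.dist_eq]
  exact hlip x y

end AbsSubLeMul

theorem tendsto_iterate_of_isLeast_fixedPt {α : Type*} [ConditionallyCompleteLinearOrder α]
    [TopologicalSpace α] [OrderTopology α] {T : α → α} {a c : α} (hT : Monotone T)
    (hcont : Continuous T) (ha : a ≤ T a) (hc : IsFixedPt T c) (hac : a ≤ c)
    (hmin : ∀ d, IsFixedPt T d → a ≤ d → c ≤ d) :
    Tendsto (fun n => T^[n] a) atTop (𝓝 c) := by
  have hbound : ∀ n, T^[n] a ≤ c := fun n => (hc.iterate n).eq ▸ hT.iterate n hac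
  have hbdd : BddAbove (Set.range fun n => T^[n] a) := ⟨c, Set.forall_mem_range.2 hbound⟩
  have hlim := tendsto_atTop_ciSup (hT.monotone_iterate_of_le_map ha) hbdd
  have hfix := isFixedPt_of_tendsto_iterate hlim hcont.continuousAt
  have hle : (⨆ n, T^[n] a) ≤ c := ciSup_le hbound
  rwa [le_antisymm hle (hmin _ hfix (le_ciSup hbdd 0))] at hlim

def krasnoselskiiStep (t : ℝ) (h : ℝ → ℝ) (z : ℝ) : ℝ := (1 - t) * z + t * h z

section KrasnoselskiiStep

variable {t : ℝ} {h : ℝ → ℝ}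

theorem continuous_krasnoselskiiStep (hcont : Continuous h) :
    Continuous (krasnoselskiiStep t h) := by
  unfold krasnoselskiiStep
  fun_prop

theorem monotone_krasnoselskiiStep {L : ℝ} (hlip : ∀ x y, |h x - h y| ≤ L * |x - y|)
    (ht : 0 ≤ t) (htL : t * (1 + L) ≤ 1) : Monotone (krasnoselskiiStep t h) := by
  intro y z hyz
  have hh : -(L * (z - y)) ≤ h z - h y := by
    have hyz' := hlip y z
    rw [abs_sub_comm, abs_sub_comm y, abs_of_nonneg (sub_nonneg.2 hyz)] at hyz'
    linarith [neg_abs_le (h z - h y)]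
  unfold krasnoselskiiStep
  nlinarith [mul_le_mul_of_nonneg_left hh ht, mul_le_mul_of_nonneg_right htL (sub_nonneg.2 hyz)]

theorem isFixedPt_krasnoselskiiStep_iff (ht : t ≠ 0) {z : ℝ} :
    IsFixedPt (krasnoselskiiStep t h) z ↔ IsFixedPt h z := by
  unfold IsFixedPt krasnoselskiiStep
  constructor
  · intro hz
    have : t * (h z - z) = 0 := by linarith
    linarith [(mul_eq_zero.1 this).resolve_left ht]
  · intro hz
    rw [hz]
    ring

theorem lt_krasnoselskiiStep (ht : 0 < t) {z : ℝ} (hz : z < h z) : z < krasnoselskiiStep t h z := by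
  unfold krasnoselskiiStep
  nlinarith

end KrasnoselskiiStep

theorem stmt_13_general (L t c : ℝ) (h : ℝ → ℝ)
    (hlip : ∀ x y : ℝ, |h x - h y| ≤ L * |x - y|)
    (ht0 : 0 < t) (ht1 : t ≤ 1 / (1 + L))
    (x : ℕ → ℝ)
    (hstart : h (x 0) > x 0)
    (hcfix : h c = c) (hcgt : x 0 < c)
    (hcmin : ∀ d : ℝ, h d = d → x 0 < d → c ≤ d)
    (hrec : ∀ n, x (n + 1) = (1 - t) * x n + t * h (x n)) :
    Monotone x ∧ Filter.Tendsto x Filter.atTop (nhds c) := by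
  set T := krasnoselskiiStep t h
  have hL := nonneg_of_abs_sub_le_mul hlip
  have hT : Monotone T :=
    monotone_krasnoselskiiStep hlip ht0.le ((le_div_iff₀ (by linarith)).1 ht1)
  have hfix : ∀ {z}, IsFixedPt T z ↔ IsFixedPt h z := isFixedPt_krasnoselskiiStep_iff ht0.ne'
  have horbit : x = fun n => T^[n] (x 0) := by
    funext n
    induction n with
    | zero => rfl
    | succ n ih => rw [iterate_succ_apply', ← ih, hrec]; rfl
  have hstep := lt_krasnoselskiiStep ht0 hstart
  rw [horbit]
  refine ⟨hT.monotone_iterate_of_le_map hstep.le, ?_⟩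
  refine tendsto_iterate_of_isLeast_fixedPt hT (continuous_krasnoselskiiStep
    (continuous_of_abs_sub_le_mul hlip)) hstep.le (hfix.2 hcfix) hcgt.le fun d hd hxd => ?_
  refine hcmin d (hfix.1 hd) (hxd.lt_of_ne ?_)
  rintro rfl
  exact hstep.ne hd.symm

/-- If `h : ℝ → ℝ` is L-Lipschitz, `h x₀ > x₀`, and `c` is the smallest fixed
point of `h` greater than `x₀`, then the Krasnoselskii iteration starting at
`x₀` is nondecreasing and converges to `c`. -/
theorem stmt_13 (L t c : ℝ) (hL : 0 < L) (h : ℝ → ℝ)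
    (hlip : ∀ x y : ℝ, |h x - h y| ≤ L * |x - y|)
    (ht0 : 0 < t) (ht1 : t ≤ 1 / (1 + L))
    (x : ℕ → ℝ)
    (hstart : h (x 0) > x 0)
    (hcfix : h c = c) (hcgt : x 0 < c)
    (hcmin : ∀ d : ℝ, h d = d → x 0 < d → c ≤ d)
    (hrec : ∀ n, x (n + 1) = (1 - t) * x n + t * h (x n)) :
    Monotone x ∧ Filter.Tendsto x Filter.atTop (nhds c) :=
  stmt_13_general L t c h hlip ht0 ht1 x hstart hcfix hcgt hcmin hrec
end
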